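/- arXiv:1001.4261 — 4 statements merged into one kernel-verified Lean document; each statement's English description precedes it below -/
import Mathlib

section
/- Let T be an invertible non-singular transformation of a probability space (X,B,P). Then ρ(P, P∘T^n) → 0 as n → ∞ if and only if the Radon–Nikodym derivatives (T^n)' = d(P∘T^n)/dP converge to 0 in P-measure. -/
/-!
Write `f n = (T^n)'`; these are nonnegative with `∫ f n dP ≤ 1`. Markov's inequality for `√(f n)`
bounds `P {ε ≤ f n}` by `ε^(-1/2) ∫ √(f n) dP`. Conversely, for `ε, c > 0`,
`√t ≤ ε + c⁻¹ 1{ε² ≤ t} + c t` (off `{ε² ≤ t}` trivially, on it by AM–GM), so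
`∫ √(f n) dP ≤ ε + c⁻¹ P {ε² ≤ f n} + c`, which is eventually small once `ε` and `c` are.
-/

open MeasureTheory Filter

/-- `P ∘ T^n`, the measure `A ↦ P (T^n '' A)`, for an invertible transformation `T`,
realized as the pushforward of `P` under `T⁻ⁿ = (T.symm)^[n]`. -/
noncomputable def compPow {X : Type*} [MeasurableSpace X]
    (P : Measure X) (T : X ≃ᵐ X) (n : ℕ) : Measure X :=
  Measure.map (T.symm^[n]) P

lemma Real.sqrt_le_add_one {t : ℝ} (ht : 0 ≤ t) : √t ≤ t + 1 := by
  nlinarith [Real.sq_sqrt ht, Real.sqrt_nonneg t]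

lemma Real.sqrt_le_add_ite_add_mul {ε c t : ℝ} (hε : 0 ≤ ε) (hc : 0 < c) (ht : 0 ≤ t) :
    √t ≤ ε + (if ε ^ 2 ≤ t then c⁻¹ else 0) + c * t := by
  split_ifs with h
  · have hsq : c * t + c⁻¹ - 2 * √t = c * (√t - c⁻¹) ^ 2 := by
      field_simp
      linear_combination (-c ^ 2) * Real.sq_sqrt ht
    nlinarith [Real.sqrt_nonneg t, mul_nonneg hc.le (sq_nonneg (√t - c⁻¹))]
  · have : √t ≤ ε := (Real.sqrt_le_left hε).2 (not_le.1 h).le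
    nlinarith [mul_nonneg hc.le ht]

namespace MeasureTheory

lemma Measure.integral_toReal_rnDeriv_le {X : Type*} [MeasurableSpace X] (μ ν : Measure X)
    [IsFiniteMeasure μ] [SigmaFinite ν] :
    ∫ x, (μ.rnDeriv ν x).toReal ∂ν ≤ μ.real Set.univ := by
  rw [Measure.integral_toReal_rnDeriv']
  exact sub_le_self _ measureReal_nonneg

variable {X ι : Type*} [MeasurableSpace X] {P : Measure X} [IsFiniteMeasure P]

lemma Integrable.sqrt {f : X → ℝ} (hf0 : 0 ≤ f) (hf : Integrable f P) :
    Integrable (fun x => √(f x)) P :=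
  (hf.add (integrable_const 1)).mono' hf.aemeasurable.sqrt.aestronglyMeasurable
    (.of_forall fun x => by
      simpa [abs_of_nonneg (Real.sqrt_nonneg _)] using Real.sqrt_le_add_one (hf0 x))

lemma integral_sqrt_le {f : X → ℝ} (hf0 : 0 ≤ f) (hf : Integrable f P) {ε c : ℝ}
    (hε : 0 ≤ ε) (hc : 0 < c) :
    ∫ x, √(f x) ∂P ≤
      ε * P.real Set.univ + c⁻¹ * P.real {x | ε ^ 2 ≤ f x} + c * ∫ x, f x ∂P := by
  have hA : NullMeasurableSet {x | ε ^ 2 ≤ f x} P :=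
    nullMeasurableSet_le aemeasurable_const hf.aemeasurable
  have hind : Integrable ({x | ε ^ 2 ≤ f x}.indicator fun _ => c⁻¹) P :=
    (integrable_const _).indicator₀ hA
  have hεind : Integrable (fun x => ε + {x | ε ^ 2 ≤ f x}.indicator (fun _ => c⁻¹) x) P :=
    (integrable_const ε).add hind
  calc ∫ x, √(f x) ∂P
      ≤ ∫ x, ε + {x | ε ^ 2 ≤ f x}.indicator (fun _ => c⁻¹) x + c * f x ∂P := by
        refine integral_mono (hf.sqrt hf0) (hεind.add (hf.const_mul c)) fun x => ?_
        simpa [Set.indicator_apply] using Real.sqrt_le_add_ite_add_mul hε hc (hf0 x)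
    _ = _ := by
        rw [integral_add hεind (hf.const_mul c), integral_add (integrable_const ε) hind,
          integral_indicator₀ hA, integral_const_mul]
        simp [mul_comm]

variable {l : Filter ι} {f : ι → X → ℝ}

lemma tendstoInMeasure_zero_iff_tendsto_measureReal (hf0 : ∀ i, 0 ≤ f i) :
    TendstoInMeasure P f l 0 ↔
      ∀ ε > 0, Tendsto (fun i => P.real {x | ε ≤ f i x}) l (nhds 0) := by
  simp only [tendstoInMeasure_iff_dist, Pi.zero_apply, Real.dist_0_eq_abs, measureReal_def]
  refine forall₂_congr fun ε _ => ?_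
  simp only [fun i x => abs_of_nonneg (hf0 i x)]
  rw [← ENNReal.toReal_zero,
    ENNReal.tendsto_toReal_iff (fun _ => measure_ne_top _ _) ENNReal.zero_ne_top]

theorem tendstoInMeasure_of_tendsto_integral_sqrt (hf0 : ∀ i, 0 ≤ f i)
    (hf : ∀ i, Integrable (f i) P) (h : Tendsto (fun i => ∫ x, √(f i x) ∂P) l (nhds 0)) :
    TendstoInMeasure P f l 0 := by
  refine (tendstoInMeasure_zero_iff_tendsto_measureReal hf0).2 fun ε hε => ?_
  have hsqrt : ∀ i, {x | ε ≤ f i x} = {x | √ε ≤ √(f i x)} := fun i => by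
    ext x
    simp [Real.sqrt_le_sqrt_iff (hf0 i x)]
  refine squeeze_zero (fun _ => measureReal_nonneg) (fun i => ?_) (by simpa using h.div_const √ε)
  rw [hsqrt, le_div_iff₀ (Real.sqrt_pos.2 hε), mul_comm]
  exact mul_meas_ge_le_integral_of_nonneg (.of_forall fun _ => Real.sqrt_nonneg _)
    ((hf i).sqrt (hf0 i)) _

theorem tendsto_integral_sqrt_of_tendstoInMeasure (hf0 : ∀ i, 0 ≤ f i)
    (hf : ∀ i, Integrable (f i) P) {C : ℝ} (hC : ∀ i, ∫ x, f i x ∂P ≤ C)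
    (h : TendstoInMeasure P f l 0) : Tendsto (fun i => ∫ x, √(f i x) ∂P) l (nhds 0) := by
  refine tendsto_order.2 ⟨fun a ha => .of_forall fun i =>
    ha.trans_le (integral_nonneg fun _ => Real.sqrt_nonneg _), fun δ hδ => ?_⟩
  obtain ⟨ε, hε, hεδ⟩ := exists_pos_mul_lt (by positivity : 0 < δ / 3) (P.real Set.univ)
  obtain ⟨c, hc, hcδ⟩ := exists_pos_mul_lt (by positivity : 0 < δ / 3) C
  have hsmall : ∀ᶠ i in l, c⁻¹ * P.real {x | ε ^ 2 ≤ f i x} < δ / 3 := by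
    refine (tendsto_order.1 ?_).2 _ (by positivity : 0 < δ / 3)
    simpa using
      ((tendstoInMeasure_zero_iff_tendsto_measureReal hf0).1 h _ (by positivity)).const_mul c⁻¹
  filter_upwards [hsmall] with i hi
  have hbound := integral_sqrt_le (hf0 i) (hf i) hε.le hc
  have hcC := mul_le_mul_of_nonneg_left (hC i) hc.le
  linarith

end MeasureTheory

instance isProbabilityMeasure_compPow {X : Type*} [MeasurableSpace X] (P : Measure X)
    [IsProbabilityMeasure P] (T : X ≃ᵐ X) (n : ℕ) : IsProbabilityMeasure (compPow P T n) :=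
  Measure.isProbabilityMeasure_map (T.symm.measurable.iterate n).aemeasurable

theorem hellinger_tendsto_zero_iff_rnDeriv_tendstoInMeasure_general
    {X : Type*} [MeasurableSpace X] (P : Measure X) [IsProbabilityMeasure P]
    (T : X ≃ᵐ X) :
    Tendsto (fun n : ℕ =>
        ∫ x, Real.sqrt (((compPow P T n).rnDeriv P x).toReal) ∂P) atTop (nhds 0)
      ↔ TendstoInMeasure P
          (fun (n : ℕ) (x : X) => ((compPow P T n).rnDeriv P x).toReal) atTop 0 := by
  have hf0 : ∀ n, 0 ≤ fun x => ((compPow P T n).rnDeriv P x).toReal :=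
    fun _ _ => ENNReal.toReal_nonneg
  have hf : ∀ n, Integrable (fun x => ((compPow P T n).rnDeriv P x).toReal) P :=
    fun _ => Measure.integrable_toReal_rnDeriv
  have hC : ∀ n, ∫ x, ((compPow P T n).rnDeriv P x).toReal ∂P ≤ 1 := fun n => by
    simpa using Measure.integral_toReal_rnDeriv_le (compPow P T n) P
  exact ⟨tendstoInMeasure_of_tendsto_integral_sqrt hf0 hf,
    tendsto_integral_sqrt_of_tendstoInMeasure hf0 hf hC⟩

theorem hellinger_tendsto_zero_iff_rnDeriv_tendstoInMeasure
    {X : Type*} [MeasurableSpace X] (P : Measure X) [IsProbabilityMeasure P]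
    (T : X ≃ᵐ X)
    (hns : ∀ n : ℕ, compPow P T n ≪ P ∧ P ≪ compPow P T n) :
    Tendsto (fun n : ℕ =>
        ∫ x, Real.sqrt (((compPow P T n).rnDeriv P x).toReal) ∂P) atTop (nhds 0)
      ↔ TendstoInMeasure P
          (fun (n : ℕ) (x : X) => ((compPow P T n).rnDeriv P x).toReal) atTop 0 :=
  hellinger_tendsto_zero_iff_rnDeriv_tendstoInMeasure_general P T
end

section
/- Let T be an invertible non-singular transformation of (X,B,P) with unitary Koopman operator U f = √(T')·(f∘T) on L²(X,P). If ρ(P, P∘T^n) → 0, then for every f ∈ L²(X,P), ⟨f, U^n f⟩ = ∫ f·U^n f dP → 0 as n → ∞. -/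
/-! For bounded `s`, `|⟨s, U^n s⟩| ≤ ‖s‖∞² ∫ √((T^n)') dP = ‖s‖∞² ρ(P, P ∘ T^n) → 0`.
Since `U^n` is an isometry of `L²(P)` (change of variables along `T^n`, using `P ∘ T^n ~ P`),
the quadratic forms `f ↦ ⟨f, U^n f⟩` are Lipschitz on bounded subsets of `L²`, uniformly in `n`,
so the convergence passes from simple functions to all of `L²`. -/

open MeasureTheory Filter

section WeightedComposition

variable {X Y : Type*} [MeasurableSpace X] {μ ν : Measure X}

lemma abs_integral_mul_le_eLpNorm_mul_eLpNorm {f g : X → ℝ} (hf : MemLp f 2 μ)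
    (hg : MemLp g 2 μ) :
    |∫ x, f x * g x ∂μ| ≤ (eLpNorm f 2 μ).toReal * (eLpNorm g 2 μ).toReal := by
  have h_ae : (fun x => inner ℝ (hf.toLp f x) (hg.toLp g x)) =ᵐ[μ] fun x => f x * g x := by
    filter_upwards [hf.coeFn_toLp, hg.coeFn_toLp] with x hfx hgx
    simp [hfx, hgx, mul_comm]
  have h := abs_real_inner_le_norm (hf.toLp f) (hg.toLp g)
  rwa [L2.inner_def, integral_congr_ae h_ae, Lp.norm_toLp, Lp.norm_toLp] at h

lemma eLpNorm_sqrt_rnDeriv_mul [ν.HaveLebesgueDecomposition μ] [SigmaFinite ν] (hνμ : ν ≪ μ)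
    {g : X → ℝ} (hg : AEMeasurable g μ) :
    eLpNorm (fun x => √(ν.rnDeriv μ x).toReal * g x) 2 μ = eLpNorm g 2 ν := by
  simp only [eLpNorm_eq_lintegral_rpow_enorm_toReal two_ne_zero ENNReal.ofNat_ne_top,
    ENNReal.toReal_ofNat, ENNReal.rpow_ofNat]
  congr 1
  rw [← lintegral_rnDeriv_mul hνμ (hg.enorm.pow_const _)]
  refine lintegral_congr_ae ((Measure.rnDeriv_lt_top ν μ).mono fun x hx => ?_)
  dsimp only
  rw [enorm_mul, mul_pow, Real.enorm_eq_ofReal (Real.sqrt_nonneg _),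
    ← ENNReal.ofReal_pow (Real.sqrt_nonneg _), Real.sq_sqrt ENNReal.toReal_nonneg,
    ENNReal.ofReal_toReal hx.ne]

lemma integrable_sqrt_rnDeriv [IsFiniteMeasure μ] [IsFiniteMeasure ν] (hνμ : ν ≪ μ) :
    Integrable (fun x => √(ν.rnDeriv μ x).toReal) μ := by
  have h := eLpNorm_sqrt_rnDeriv_mul hνμ (aemeasurable_const (b := (1 : ℝ)))
  simp only [mul_one] at h
  exact MemLp.integrable one_le_two
    ⟨(Measure.measurable_rnDeriv ν μ).ennreal_toReal.sqrt.aestronglyMeasurable,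
      h ▸ (memLp_const (1 : ℝ)).2⟩

/-- With `μ = P`, `ν = P ∘ T^n` and `φ = T^n` this is `U^n`. -/
noncomputable def weightedComp (ν μ : Measure X) (φ : X → Y) (f : Y → ℝ) : X → ℝ :=
  fun x => √(ν.rnDeriv μ x).toReal * f (φ x)

lemma weightedComp_sub (φ : X → Y) (f g : Y → ℝ) :
    weightedComp ν μ φ (f - g) = weightedComp ν μ φ f - weightedComp ν μ φ g := by
  ext x
  simp only [weightedComp, Pi.sub_apply, mul_sub]

variable [MeasurableSpace Y] {μY : Measure Y} {φ : X → Y}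
  [ν.HaveLebesgueDecomposition μ] [SigmaFinite ν]

lemma eLpNorm_weightedComp (hφ : AEMeasurable φ ν) (hmap : ν.map φ = μY) (hνμ : ν ≪ μ)
    (hμν : μ ≪ ν) {f : Y → ℝ} (hf : AEStronglyMeasurable f μY) :
    eLpNorm (weightedComp ν μ φ f) 2 μ = eLpNorm f 2 μY := by
  subst hmap
  have hfφ : AEStronglyMeasurable (f ∘ φ) ν := hf.comp_aemeasurable hφ
  rw [eLpNorm_map_measure hf hφ, ← eLpNorm_sqrt_rnDeriv_mul hνμ (hfφ.mono_ac hμν).aemeasurable]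
  rfl

theorem MeasureTheory.MemLp.weightedComp (hφ : AEMeasurable φ ν) (hmap : ν.map φ = μY)
    (hνμ : ν ≪ μ) (hμν : μ ≪ ν) {f : Y → ℝ} (hf : MemLp f 2 μY) :
    MemLp (weightedComp ν μ φ f) 2 μ := by
  refine ⟨?_, (eLpNorm_weightedComp hφ hmap hνμ hμν hf.1).symm ▸ hf.2⟩
  subst hmap
  exact (Measure.measurable_rnDeriv ν μ).ennreal_toReal.sqrt.aestronglyMeasurable.mul
    ((hf.1.comp_aemeasurable hφ).mono_ac hμν)

end WeightedComposition

section SelfMap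

variable {X : Type*} [MeasurableSpace X] {μ ν : Measure X} {φ : X → X}

lemma norm_integral_mul_weightedComp_le (hint : Integrable (fun x => √(ν.rnDeriv μ x).toReal) μ)
    {s : X → ℝ} {C : ℝ} (hC : ∀ x, ‖s x‖ ≤ C) :
    ‖∫ x, s x * weightedComp ν μ φ s x ∂μ‖ ≤ C ^ 2 * ∫ x, √(ν.rnDeriv μ x).toReal ∂μ := by
  rw [← integral_const_mul]
  refine norm_integral_le_of_norm_le (hint.const_mul _) (.of_forall fun x => ?_)
  have hD := Real.sqrt_nonneg (ν.rnDeriv μ x).toReal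
  calc ‖s x * weightedComp ν μ φ s x‖
      = √(ν.rnDeriv μ x).toReal * (‖s x‖ * ‖s (φ x)‖) := by
        rw [weightedComp, norm_mul, norm_mul, Real.norm_of_nonneg hD]; ring
    _ ≤ √(ν.rnDeriv μ x).toReal * (C * C) :=
        mul_le_mul_of_nonneg_left
          (mul_le_mul (hC x) (hC _) (norm_nonneg _) ((norm_nonneg _).trans (hC x))) hD
    _ = C ^ 2 * √(ν.rnDeriv μ x).toReal := by ring

variable [ν.HaveLebesgueDecomposition μ] [SigmaFinite ν]

lemma abs_integral_mul_weightedComp_sub_le (hφ : AEMeasurable φ ν) (hmap : ν.map φ = μ)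
    (hνμ : ν ≪ μ) (hμν : μ ≪ ν) {f s : X → ℝ} (hf : MemLp f 2 μ) (hs : MemLp s 2 μ) :
    |∫ x, f x * weightedComp ν μ φ f x ∂μ - ∫ x, s x * weightedComp ν μ φ s x ∂μ| ≤
      (eLpNorm (f - s) 2 μ).toReal *
        (2 * (eLpNorm f 2 μ).toReal + (eLpNorm (f - s) 2 μ).toReal) := by
  set g := f - s
  have hg : MemLp g 2 μ := hf.sub hs
  set U := weightedComp ν μ φ
  have hUf : MemLp (U f) 2 μ := hf.weightedComp hφ hmap hνμ hμν
  have hUg : MemLp (U g) 2 μ := hg.weightedComp hφ hmap hνμ hμν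
  have hUs : U s = U f - U g := by rw [← weightedComp_sub, sub_sub_cancel]
  have hnormf : eLpNorm (U f) 2 μ = eLpNorm f 2 μ := eLpNorm_weightedComp hφ hmap hνμ hμν hf.1
  have hnormg : eLpNorm (U g) 2 μ = eLpNorm g 2 μ := eLpNorm_weightedComp hφ hmap hνμ hμν hg.1
  have hmul {a b : X → ℝ} (ha : MemLp a 2 μ) (hb : MemLp b 2 μ) :
      Integrable (fun x => a x * b x) μ :=
    ha.integrable_mul hb
  have hsplit : ∫ x, f x * U f x ∂μ - ∫ x, s x * U s x ∂μ =
      ∫ x, g x * U f x ∂μ + ∫ x, f x * U g x ∂μ - ∫ x, g x * U g x ∂μ := by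
    have hsum : Integrable (fun x => g x * U f x + f x * U g x) μ :=
      (hmul hg hUf).add (hmul hf hUg)
    rw [← integral_add (hmul hg hUf) (hmul hf hUg), ← integral_sub hsum (hmul hg hUg),
      ← integral_sub (hmul hf hUf) (hmul hs (hUs ▸ hUf.sub hUg))]
    congr 1 with x
    rw [hUs]
    simp only [g, Pi.sub_apply]
    ring
  rw [hsplit]
  calc _ ≤ |∫ x, g x * U f x ∂μ| + |∫ x, f x * U g x ∂μ| + |∫ x, g x * U g x ∂μ| :=
        (abs_sub _ _).trans (add_le_add_left (abs_add_le _ _) _)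
    _ ≤ (eLpNorm g 2 μ).toReal * (eLpNorm f 2 μ).toReal +
          (eLpNorm f 2 μ).toReal * (eLpNorm g 2 μ).toReal +
          (eLpNorm g 2 μ).toReal * (eLpNorm g 2 μ).toReal := by
        gcongr
        · exact hnormf ▸ abs_integral_mul_le_eLpNorm_mul_eLpNorm hg hUf
        · exact hnormg ▸ abs_integral_mul_le_eLpNorm_mul_eLpNorm hf hUg
        · exact hnormg ▸ abs_integral_mul_le_eLpNorm_mul_eLpNorm hg hUg
    _ = _ := by ring

end SelfMap

section CompPow

variable {X : Type*} [MeasurableSpace X] (P : Measure X) (T : X ≃ᵐ X) (n : ℕ)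

instance [IsProbabilityMeasure P] : IsProbabilityMeasure (compPow P T n) :=
  Measure.isProbabilityMeasure_map (T.symm.measurable.iterate n).aemeasurable

lemma map_iterate_compPow : (compPow P T n).map (⇑T)^[n] = P := by
  rw [compPow, Measure.map_map (T.measurable.iterate n) (T.symm.measurable.iterate n),
    (Function.LeftInverse.iterate T.apply_symm_apply n).comp_eq_id, Measure.map_id]

end CompPow

lemma tendsto_zero_of_forall_abs_sub_le {ι : Type*} {l : Filter ι} {a : ι → ℝ}
    (h : ∀ ε > 0, ∃ b : ι → ℝ, Tendsto b l (nhds 0) ∧ ∀ i, |a i - b i| ≤ ε) :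
    Tendsto a l (nhds 0) := by
  refine Metric.tendsto_nhds.2 fun ε hε => ?_
  obtain ⟨b, hb, hab⟩ := h (ε / 2) (half_pos hε)
  filter_upwards [Metric.tendsto_nhds.1 hb (ε / 2) (half_pos hε)] with i hi
  rw [Real.dist_0_eq_abs] at hi ⊢
  linarith [abs_sub_abs_le_abs_sub (a i) (b i), hab i]

lemma exists_pos_mul_add_le {a ε : ℝ} (ha : 0 ≤ a) (hε : 0 < ε) : ∃ δ > 0, δ * (a + δ) ≤ ε := by
  refine ⟨min 1 (ε / (a + 1)), by positivity, ?_⟩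
  calc min 1 (ε / (a + 1)) * (a + min 1 (ε / (a + 1))) ≤ ε / (a + 1) * (a + 1) := by
        gcongr
        exacts [min_le_right _ _, min_le_left _ _]
    _ = ε := div_mul_cancel₀ _ (by positivity)

theorem koopman_mixing_of_hellinger_tendsto_zero
    {X : Type*} [MeasurableSpace X] (P : Measure X) [IsProbabilityMeasure P]
    (T : X ≃ᵐ X)
    (hns : ∀ n : ℕ, compPow P T n ≪ P ∧ P ≪ compPow P T n)
    (hρ : Tendsto (fun n : ℕ =>
        ∫ x, Real.sqrt (((compPow P T n).rnDeriv P x).toReal) ∂P) atTop (nhds 0)) :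
    ∀ f : X → ℝ, MemLp f 2 P →
      Tendsto (fun n : ℕ =>
          ∫ x, f x * (Real.sqrt (((compPow P T n).rnDeriv P x).toReal) * f ((⇑T)^[n] x)) ∂P)
        atTop (nhds 0) := by
  intro f hf
  refine tendsto_zero_of_forall_abs_sub_le fun ε hε => ?_
  obtain ⟨δ, hδ, hδε⟩ :=
    exists_pos_mul_add_le (by positivity : 0 ≤ 2 * (eLpNorm f 2 P).toReal) hε
  obtain ⟨s, hfs, hs⟩ :=
    hf.exists_simpleFunc_eLpNorm_sub_lt ENNReal.ofNat_ne_top (ENNReal.ofReal_pos.2 hδ).ne'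
  obtain ⟨C, hC⟩ := s.exists_forall_norm_le
  refine ⟨fun n => ∫ x, s x * weightedComp (compPow P T n) P (⇑T)^[n] s x ∂P, ?_, fun n => ?_⟩
  · refine squeeze_zero_norm (fun n => norm_integral_mul_weightedComp_le
      (integrable_sqrt_rnDeriv (hns n).1) hC) ?_
    simpa using hρ.const_mul (C ^ 2)
  · have hfs_le : (eLpNorm (f - ⇑s) 2 P).toReal ≤ δ := (ENNReal.toReal_lt_of_lt_ofReal hfs).le
    refine (abs_integral_mul_weightedComp_sub_le (T.measurable.iterate n).aemeasurable
      (map_iterate_compPow P T n) (hns n).1 (hns n).2 hf hs).trans (hδε.trans' ?_)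
    gcongr
end

section
/- Let P = ∏_{k∈ℤ} P_k be a non-singular product measure on {0,1}^ℤ such that lim_{k→−∞} P_k({0}) = p exists, and let Q = ∏_{k∈ℤ} μ_p be the i.i.d. (p, 1−p) product measure. If P ⊥ Q, then d(P, P∘T^n) → ∞ as n → ∞, i.e., the shift is NS zero-type. -/
open MeasureTheory Filter

/-- `μ` is the product measure on `{0,1}^ℤ` whose `k`-th factor gives mass `p k`
to `0` (here `false`) and `1 - p k` to `1` (here `true`). -/
def IsProductMeasure (μ : Measure (ℤ → Bool)) (p : ℤ → ℝ) : Prop :=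
  ∀ (F : Finset ℤ) (b : ℤ → Bool),
    μ {w | ∀ i ∈ F, w i = b i} =
      ∏ i ∈ F, ENNReal.ofReal (if b i = false then p i else 1 - p i)

/-- The Kakutani–Hellinger distance `d(P, P ∘ Tⁿ)`, as a value in `ℝ≥0∞`. -/
noncomputable def dShift (p : ℤ → ℝ) (n : ℕ) : ENNReal :=
  ∑' k : ℤ, ENNReal.ofReal
    ((Real.sqrt (p k) - Real.sqrt (p (k - n))) ^ 2 +
     (Real.sqrt (1 - p k) - Real.sqrt (1 - p (k - n))) ^ 2)

/-!
Write `hellingerSq q r` for the squared Hellinger distance between the laws `(q, 1 - q)` and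
`(r, 1 - r)`, so that `d(P, P ∘ Tⁿ) = ∑ₖ hellingerSq (p k) (p (k - n))`. For fixed `k` this term
tends to `hellingerSq (p k) pl` as `n → ∞`, so by Fatou for sums it suffices that
`∑ₖ hellingerSq (p k) pl = ∞`.

If that series converged, the affinities `ρₖ = 1 - hellingerSq (p k) pl / 2 ∈ (0, 1]` would have
all finite products bounded below by some `C > 0`. For a cylinder `A` over coordinates `F`,
Cauchy–Schwarz gives `∏_{k ∈ F} ρₖ ≤ √(P A * Q A) + √(P Aᶜ * Q Aᶜ)`, and approximating a
`P`-null, `Q`-conull set by a cylinder makes the right-hand side smaller than `C`.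
-/

open Set Topology
open scoped symmDiff

noncomputable def hellingerSq (q r : ℝ) : ℝ :=
  (√q - √r) ^ 2 + (√(1 - q) - √(1 - r)) ^ 2

lemma hellingerSq_nonneg (q r : ℝ) : 0 ≤ hellingerSq q r := by
  unfold hellingerSq; positivity

lemma continuous_hellingerSq_right (q : ℝ) : Continuous (hellingerSq q) := by
  unfold hellingerSq; fun_prop

lemma ENNReal.tendsto_tsum_nhds_top {ι β : Type*} {l : Filter β} {g : β → ι → ENNReal}
    {h : ι → ENNReal} (hg : ∀ i, Tendsto (g · i) l (𝓝 (h i))) (hh : ∑' i, h i = ⊤) :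
    Tendsto (fun b => ∑' i, g b i) l (𝓝 ⊤) := by
  refine ENNReal.tendsto_nhds_top fun M => ?_
  obtain ⟨F, hF⟩ : ∃ F : Finset ι, (M : ENNReal) < ∑ i ∈ F, h i := by
    rw [← lt_iSup_iff, ← ENNReal.tsum_eq_iSup_sum, hh]
    exact ENNReal.natCast_lt_top M
  filter_upwards [(tendsto_finsetSum F fun i _ => hg i).eventually_const_lt hF] with b hb
  exact hb.trans_le (ENNReal.sum_le_tsum F)

lemma tendsto_sub_natCast_atBot (k : ℤ) : Tendsto (fun n : ℕ => k - (n : ℤ)) atTop atBot :=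
  tendsto_atBot_add_const_left _ k (tendsto_neg_atTop_atBot.comp tendsto_natCast_atTop_atTop)

lemma tendsto_dShift_atTop_of_tsum_eq_top {p : ℤ → ℝ} {pl : ℝ} (hlim : Tendsto p atBot (𝓝 pl))
    (hT : ∑' k, ENNReal.ofReal (hellingerSq (p k) pl) = ⊤) :
    Tendsto (dShift p) atTop (𝓝 ⊤) :=
  ENNReal.tendsto_tsum_nhds_top (fun k => ENNReal.tendsto_ofReal
    ((continuous_hellingerSq_right (p k)).continuousAt.tendsto.comp
      (hlim.comp (tendsto_sub_natCast_atBot k)))) hT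

noncomputable def bitWeight (q : ℝ) (b : Bool) : ℝ := if b = false then q else 1 - q

lemma bitWeight_nonneg {q : ℝ} (hq : q ∈ Icc 0 1) (b : Bool) : 0 ≤ bitWeight q b := by
  unfold bitWeight; split_ifs <;> linarith [hq.1, hq.2]

noncomputable def hellingerAffinity (q r : ℝ) : ℝ := ∑ b : Bool, √(bitWeight q b * bitWeight r b)

lemma hellingerAffinity_eq_one_sub_hellingerSq {q r : ℝ} (hq : q ∈ Icc 0 1)
    (hr : r ∈ Icc 0 1) :
    hellingerAffinity q r = 1 - hellingerSq q r / 2 := by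
  have hq' : 0 ≤ 1 - q := by linarith [hq.2]
  have hr' : 0 ≤ 1 - r := by linarith [hr.2]
  simp only [hellingerAffinity, hellingerSq, bitWeight, Fintype.sum_bool, Bool.true_eq_false,
    if_true, if_false, Real.sqrt_mul hq.1, Real.sqrt_mul hq']
  nlinarith [Real.sq_sqrt hq.1, Real.sq_sqrt hr.1, Real.sq_sqrt hq', Real.sq_sqrt hr']

lemma hellingerAffinity_le_one {q r : ℝ} (hq : q ∈ Icc 0 1) (hr : r ∈ Icc 0 1) :
    hellingerAffinity q r ≤ 1 := by
  rw [hellingerAffinity_eq_one_sub_hellingerSq hq hr]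
  linarith [hellingerSq_nonneg q r]

lemma hellingerAffinity_pos {q r : ℝ} (hq : q ∈ Ioo 0 1) (hr : r ∈ Icc 0 1) :
    0 < hellingerAffinity q r := by
  simp only [hellingerAffinity, bitWeight, Fintype.sum_bool, Bool.true_eq_false, if_true,
    if_false]
  rcases hr.1.eq_or_lt with rfl | hr0
  · have : 0 < √((1 - q) * (1 - 0)) := Real.sqrt_pos.2 (by nlinarith [hq.2])
    positivity
  · have : 0 < √(q * r) := Real.sqrt_pos.2 (mul_pos hq.1 hr0)
    positivity

lemma exists_pos_le_prod_of_summable_one_sub {ι : Type*} {a : ι → ℝ} (ha : ∀ i, 0 < a i)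
    (ha1 : ∀ i, a i ≤ 1) (hs : Summable fun i => 1 - a i) :
    ∃ C, 0 < C ∧ ∀ F : Finset ι, C ≤ ∏ i ∈ F, a i := by
  have hlog : Summable fun i => Real.log (a i) := by
    simpa using Real.summable_log_one_add_of_summable hs.neg
  refine ⟨Real.exp (∑' i, Real.log (a i)), Real.exp_pos _, fun F => ?_⟩
  have hle : ∑ i ∈ F, -Real.log (a i) ≤ ∑' i, -Real.log (a i) :=
    hlog.neg.sum_le_tsum F fun i _ => neg_nonneg.2 (Real.log_nonpos (ha i).le (ha1 i))
  rw [tsum_neg, Finset.sum_neg_distrib, neg_le_neg_iff] at hle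
  calc Real.exp (∑' i, Real.log (a i)) ≤ Real.exp (∑ i ∈ F, Real.log (a i)) :=
        Real.exp_le_exp.2 hle
    _ = ∏ i ∈ F, a i := by
        rw [Real.exp_sum]
        exact Finset.prod_congr rfl fun i _ => Real.exp_log (ha i)

lemma sum_sqrt_mul_le_add_compl {α : Type*} [Fintype α] [DecidableEq α] {x y : α → ℝ}
    (hx : ∀ a, 0 ≤ x a) (hy : ∀ a, 0 ≤ y a) (S : Finset α) :
    ∑ a, √(x a * y a) ≤
      √((∑ a ∈ S, x a) * ∑ a ∈ S, y a) + √((∑ a ∈ Sᶜ, x a) * ∑ a ∈ Sᶜ, y a) := by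
  have cauchySchwarz : ∀ T : Finset α,
      ∑ a ∈ T, √(x a * y a) ≤ √((∑ a ∈ T, x a) * ∑ a ∈ T, y a) := fun T => by
    simp_rw [Real.sqrt_mul (hx _), Real.sqrt_mul (Finset.sum_nonneg fun a _ => hx a)]
    exact Real.sum_sqrt_mul_sqrt_le T hx hy
  rw [← Finset.sum_add_sum_compl S]
  exact add_le_add (cauchySchwarz S) (cauchySchwarz Sᶜ)

lemma IsProductMeasure.measure_restrict_preimage_singleton {μ : Measure (ℤ → Bool)} {p : ℤ → ℝ}
    (hμ : IsProductMeasure μ p) (F : Finset ℤ) (σ : F → Bool) :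
    μ ((F.restrict : (ℤ → Bool) → (F → Bool)) ⁻¹' {σ}) =
      ∏ i : F, ENNReal.ofReal (bitWeight (p i) (σ i)) := by
  set b : ℤ → Bool := fun j => if h : j ∈ F then σ ⟨j, h⟩ else false
  have hb : F.restrict b = σ := funext fun i => by simp [b]
  have hcyl : (F.restrict : (ℤ → Bool) → (F → Bool)) ⁻¹' {σ} = {w | ∀ i ∈ F, w i = b i} := by
    ext w
    simp [← hb, funext_iff]
  rw [hcyl, hμ F b, ← hb, ← Finset.prod_coe_sort F]
  rfl

lemma IsProductMeasure.measureReal_cylinder {μ : Measure (ℤ → Bool)} [IsFiniteMeasure μ]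
    {p : ℤ → ℝ} (hμ : IsProductMeasure μ p) (hp : ∀ i, p i ∈ Icc 0 1) (F : Finset ℤ)
    (S : Finset (F → Bool)) :
    μ.real (cylinder F ↑S) = ∑ σ ∈ S, ∏ i : F, bitWeight (p i) (σ i) := by
  have hres : Measurable (F.restrict : (ℤ → Bool) → (F → Bool)) := measurable_restrict _
  rw [measureReal_def, cylinder, ← sum_measure_preimage_singleton S
      fun σ _ => hres (measurableSet_singleton σ),
    ENNReal.toReal_sum fun σ _ => measure_ne_top _ _]
  refine Finset.sum_congr rfl fun σ _ => ?_
  rw [hμ.measure_restrict_preimage_singleton, ENNReal.toReal_prod]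
  exact Finset.prod_congr rfl fun i _ => ENNReal.toReal_ofReal (bitWeight_nonneg (hp i) _)

lemma prod_hellingerAffinity_eq_sum_sqrt (p r : ℤ → ℝ) (F : Finset ℤ) (hp : ∀ i, p i ∈ Icc 0 1)
    (hr : ∀ i, r i ∈ Icc 0 1) :
    ∏ k ∈ F, hellingerAffinity (p k) (r k) = ∑ σ : F → Bool,
      √((∏ i : F, bitWeight (p i) (σ i)) * ∏ i : F, bitWeight (r i) (σ i)) := by
  rw [← Finset.prod_coe_sort F]
  simp only [hellingerAffinity]
  rw [Fintype.prod_sum]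
  refine Finset.sum_congr rfl fun σ _ => ?_
  rw [← Finset.prod_mul_distrib]
  exact (Real.sqrt_prod _ fun (i : F) _ =>
    mul_nonneg (bitWeight_nonneg (hp i) _) (bitWeight_nonneg (hr i) _)).symm

lemma IsProductMeasure.exists_prod_hellingerAffinity_le {P Q : Measure (ℤ → Bool)}
    [IsFiniteMeasure P] [IsFiniteMeasure Q] {p r : ℤ → ℝ} (hP : IsProductMeasure P p)
    (hQ : IsProductMeasure Q r)
    (hp : ∀ i, p i ∈ Icc 0 1) (hr : ∀ i, r i ∈ Icc 0 1) {A : Set (ℤ → Bool)}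
    (hA : A ∈ measurableCylinders fun _ : ℤ => Bool) :
    ∃ F : Finset ℤ, ∏ k ∈ F, hellingerAffinity (p k) (r k) ≤
      √(P.real A * Q.real A) + √(P.real Aᶜ * Q.real Aᶜ) := by
  classical
  obtain ⟨F, S, -, rfl⟩ := (mem_measurableCylinders A).1 hA
  obtain ⟨T, rfl⟩ : ∃ T : Finset (F → Bool), ↑T = S := ⟨S.toFinite.toFinset, by simp⟩
  refine ⟨F, ?_⟩
  rw [compl_cylinder, ← Finset.coe_compl, prod_hellingerAffinity_eq_sum_sqrt p r F hp hr,
    hP.measureReal_cylinder hp, hQ.measureReal_cylinder hr, hP.measureReal_cylinder hp,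
    hQ.measureReal_cylinder hr]
  exact sum_sqrt_mul_le_add_compl
    (fun σ => Finset.prod_nonneg fun (i : F) _ => bitWeight_nonneg (hp i) _)
    (fun σ => Finset.prod_nonneg fun (i : F) _ => bitWeight_nonneg (hr i) _) T

lemma MeasureTheory.Measure.MutuallySingular.exists_mem_measureReal_le {X : Type*}
    [m : MeasurableSpace X] {μ ν : Measure X} [IsFiniteMeasure μ] [IsFiniteMeasure ν] {𝒜 : Set (Set X)}
    (h𝒜 : IsSetAlgebra 𝒜) (hgen : m = MeasurableSpace.generateFrom 𝒜) (h : μ ⟂ₘ ν)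
    {ε : ℝ} (hε : 0 < ε) : ∃ t ∈ 𝒜, μ.real t ≤ ε ∧ ν.real tᶜ ≤ ε := by
  obtain ⟨s, hs, hμs, hνs⟩ := h
  obtain ⟨t, ht, hst⟩ := (Measure.MeasureDense.of_generateFrom_isSetAlgebra_finite (μ + ν)
    h𝒜 hgen).approx s hs (measure_ne_top _ _) ε hε
  have hle : ∀ {ρ : Measure X} {u v : Set X}, ρ v ≤ ρ u + ρ (u ∆ v) := fun {ρ u v} => by
    rw [symmDiff_comm, ← tsub_le_iff_left]
    exact le_measure_symmDiff
  refine ⟨t, ht, ENNReal.toReal_le_of_le_ofReal hε.le ?_,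
    ENNReal.toReal_le_of_le_ofReal hε.le ?_⟩
  · calc μ t ≤ μ s + μ (s ∆ t) := hle
      _ ≤ (μ + ν) (s ∆ t) := by rw [hμs, zero_add, Measure.add_apply]; exact le_self_add
      _ ≤ ENNReal.ofReal ε := hst.le
  · calc ν tᶜ ≤ ν sᶜ + ν (sᶜ ∆ tᶜ) := hle
      _ ≤ (μ + ν) (s ∆ t) := by
        rw [hνs, zero_add, compl_symmDiff_compl, Measure.add_apply]; exact le_add_self
      _ ≤ ENNReal.ofReal ε := hst.le

lemma IsProductMeasure.not_mutuallySingular_of_summable {P Q : Measure (ℤ → Bool)}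
    [IsProbabilityMeasure P] [IsProbabilityMeasure Q] {p r : ℤ → ℝ}
    (hP : IsProductMeasure P p) (hQ : IsProductMeasure Q r) (hp : ∀ i, p i ∈ Ioo 0 1)
    (hr : ∀ i, r i ∈ Icc 0 1) (hs : Summable fun k => hellingerSq (p k) (r k)) : ¬P ⟂ₘ Q := by
  intro hPQ
  have hp' : ∀ i, p i ∈ Icc 0 1 := fun i => Ioo_subset_Icc_self (hp i)
  obtain ⟨C, hC, hCprod⟩ := exists_pos_le_prod_of_summable_one_sub
    (fun k => hellingerAffinity_pos (hp k) (hr k))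
    (fun k => hellingerAffinity_le_one (hp' k) (hr k))
    ((hs.div_const 2).congr fun k => by
      rw [hellingerAffinity_eq_one_sub_hellingerSq (hp' k) (hr k)]; ring)
  obtain ⟨A, hA, hPA, hQA⟩ := hPQ.exists_mem_measureReal_le isSetAlgebra_measurableCylinders
    generateFrom_measurableCylinders.symm (ε := (C / 4) ^ 2) (by positivity)
  obtain ⟨F, hF⟩ := hP.exists_prod_hellingerAffinity_le hQ hp' hr hA
  have h₁ : √(P.real A * Q.real A) ≤ C / 4 := Real.sqrt_le_iff.2 ⟨by positivity,
    (mul_le_of_le_one_right measureReal_nonneg measureReal_le_one).trans hPA⟩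
  have h₂ : √(P.real Aᶜ * Q.real Aᶜ) ≤ C / 4 := Real.sqrt_le_iff.2 ⟨by positivity,
    (mul_le_of_le_one_left measureReal_nonneg measureReal_le_one).trans hQA⟩
  linarith [hCprod F]

theorem zero_type_of_singular_to_limit_general (p : ℤ → ℝ) (pl : ℝ)
    (hp : ∀ k, p k ∈ Set.Ioo (0 : ℝ) 1)
    (P Q : Measure (ℤ → Bool)) [IsProbabilityMeasure P] [IsProbabilityMeasure Q]
    (hP : IsProductMeasure P p)
    -- the marginals converge at `-∞` to `(pl, 1 - pl)`
    (hlim : Tendsto p atBot (nhds pl))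
    -- `Q` is the i.i.d. `(pl, 1 - pl)` product measure
    (hQ : IsProductMeasure Q (fun _ => pl))
    (hsing : P ⟂ₘ Q) :
    Tendsto (fun n : ℕ => dShift p n) atTop (nhds ⊤) := by
  have hpl : pl ∈ Set.Icc (0 : ℝ) 1 :=
    isClosed_Icc.mem_of_tendsto hlim (.of_forall fun k => Ioo_subset_Icc_self (hp k))
  refine tendsto_dShift_atTop_of_tsum_eq_top hlim (not_ne_iff.1 fun hfin => ?_)
  refine hP.not_mutuallySingular_of_summable hQ hp (fun _ => hpl) ?_ hsing
  exact (ENNReal.summable_toReal hfin).congr fun k =>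
    ENNReal.toReal_ofReal (hellingerSq_nonneg _ _)

theorem zero_type_of_singular_to_limit (p : ℤ → ℝ) (pl : ℝ)
    (hp : ∀ k, p k ∈ Set.Ioo (0 : ℝ) 1)
    (P Q : Measure (ℤ → Bool)) [IsProbabilityMeasure P] [IsProbabilityMeasure Q]
    (hP : IsProductMeasure P p)
    -- `P` is non-singular for the shift: `d(P, P ∘ T) < ∞`
    (hns : Summable (fun k : ℤ =>
        (Real.sqrt (p k) - Real.sqrt (p (k - 1))) ^ 2 +
        (Real.sqrt (1 - p k) - Real.sqrt (1 - p (k - 1))) ^ 2))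
    -- the marginals converge at `-∞` to `(pl, 1 - pl)`
    (hlim : Tendsto p atBot (nhds pl))
    -- `Q` is the i.i.d. `(pl, 1 - pl)` product measure
    (hQ : IsProductMeasure Q (fun _ => pl))
    (hsing : P ⟂ₘ Q) :
    Tendsto (fun n : ℕ => dShift p n) atTop (nhds ⊤) :=
  zero_type_of_singular_to_limit_general p pl hp P Q hP hlim hQ hsing
end

section
/- Let P = ∏_{k∈ℤ} P_k be a non-singular product measure on {0,1}^ℤ such that liminf_{k→−∞} P_k({0}) ≠ limsup_{k→−∞} P_k({0}). Then d(P, P∘T^n) → ∞ as n → ∞, i.e., the shift is NS zero-type. -/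
open MeasureTheory Filter

/-!
Put `x k = √(p k)`, so that `d(P, P ∘ Tⁿ) ≥ ∑ₖ (x k - x (k - n))²` and non-singularity forces
`x k - x (k - 1) → 0` as `k → -∞`. If these sums stayed bounded along some `nᵢ → ∞`, a subsequence
of the bounded functions `x - x (· - nᵢ)` would converge pointwise to some `u`. The increments of `u`
are those of `x`, since the shifted increments vanish in the limit, so `x = u + c`; and `u` is
square summable by lower semicontinuity of the sum, so `u → 0` at `-∞`. Then `x → c` and the
marginals `p = x²` would converge at `-∞`.
-/

open Topology Set
open scoped NNReal

lemma tendsto_zero_of_tendsto_sq {α : Type*} {l : Filter α} {f : α → ℝ}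
    (h : Tendsto (fun i => f i ^ 2) l (𝓝 0)) : Tendsto f l (𝓝 0) := by
  rw [tendsto_zero_iff_abs_tendsto_zero]
  simpa [Function.comp_def, Real.sqrt_sq_eq_abs] using h.sqrt

lemma tendsto_cofinite_zero_of_tsum_ofReal_sq_ne_top {ι : Type*} {u : ι → ℝ}
    (h : ∑' k, ENNReal.ofReal (u k ^ 2) ≠ ⊤) : Tendsto u cofinite (𝓝 0) := by
  refine tendsto_zero_of_tendsto_sq (Summable.tendsto_cofinite_zero ?_)
  simpa [ENNReal.toReal_ofReal (sq_nonneg _)] using ENNReal.summable_toReal h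

lemma lowerSemicontinuous_tsum_ofReal_sq {ι : Type*} :
    LowerSemicontinuous (fun w : ι → ℝ => ∑' k, ENNReal.ofReal (w k ^ 2)) :=
  lowerSemicontinuous_tsum fun k =>
    (ENNReal.continuous_ofReal.comp ((continuous_apply k).pow 2)).lowerSemicontinuous

lemma LowerSemicontinuous.le_of_tendsto {X γ α : Type*} [TopologicalSpace X] [LinearOrder γ]
    {F : X → γ} (hF : LowerSemicontinuous F) {l : Filter α} [l.NeBot] {v : α → X} {u : X}
    (hv : Tendsto v l (𝓝 u)) {C : γ} (hC : ∀ᶠ i in l, F (v i) ≤ C) : F u ≤ C := by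
  by_contra! hlt
  obtain ⟨i, hi, hi'⟩ := ((hv.eventually (hF u C hlt)).and hC).exists
  exact (hi.trans_le hi').false

lemma exists_eq_add_const_of_sub_pred_eq {G : Type*} [AddCommGroup G] {x u : ℤ → G}
    (h : ∀ k, u k - u (k - 1) = x k - x (k - 1)) : ∃ c, ∀ k, x k = u k + c := by
  have hper : Function.Periodic (x - u) 1 := fun k => by
    have := h (k + 1)
    simp only [add_sub_cancel_right] at this
    rw [Pi.sub_apply, Pi.sub_apply, sub_eq_sub_iff_sub_eq_sub]
    exact this.symm
  refine ⟨x 0 - u 0, fun k => ?_⟩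
  have := hper.int_mul_eq k
  rw [Int.cast_id, mul_one, Pi.sub_apply, Pi.sub_apply] at this
  rw [← this, add_sub_cancel]

lemma sub_pred_eq_of_tendsto_sub_shift {G : Type*} [AddCommGroup G] [TopologicalSpace G]
    [IsTopologicalAddGroup G] [T2Space G] {α : Type*} {l : Filter α} [l.NeBot] {x u : ℤ → G}
    {m : α → ℤ} (hm : Tendsto m l atTop)
    (he : Tendsto (fun k => x k - x (k - 1)) atBot (𝓝 0))
    (hu : ∀ k, Tendsto (fun i => x k - x (k - m i)) l (𝓝 (u k))) (k : ℤ) :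
    u k - u (k - 1) = x k - x (k - 1) := by
  have hkm : Tendsto (fun i => k - m i) l atBot := by
    simpa [sub_eq_add_neg, add_comm] using tendsto_atBot_add_const_right _ k
      (tendsto_neg_atTop_atBot.comp hm)
  have h1 := (hu k).sub (hu (k - 1))
  have h2 := (he.comp hkm).const_sub (x k - x (k - 1))
  rw [sub_zero] at h2
  refine tendsto_nhds_unique (h1.congr fun i => ?_) h2
  simp only [Function.comp_apply, sub_right_comm k 1 (m i)]
  abel

theorem exists_tendsto_atBot_of_frequently_tsum_ofReal_sq_sub_shift_le {x : ℤ → ℝ} {a b : ℝ}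
    (hx : ∀ k, x k ∈ Icc a b) (he : Tendsto (fun k => x k - x (k - 1)) atBot (𝓝 0)) {C : ℝ≥0}
    (hC : ∃ᶠ n : ℕ in atTop, ∑' k, ENNReal.ofReal ((x k - x (k - n)) ^ 2) ≤ C) :
    ∃ c, Tendsto x atBot (𝓝 c) := by
  obtain ⟨φ, hφ, hφC⟩ := extraction_of_frequently_atTop hC
  set v : ℕ → ℤ → ℝ := fun i k => x k - x (k - φ i)
  have hv : ∀ i, v i ∈ univ.pi fun _ => Icc (a - b) (b - a) := fun i k _ => by
    obtain ⟨h₁, h₂⟩ := hx k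
    obtain ⟨h₃, h₄⟩ := hx (k - φ i)
    constructor <;> linarith
  obtain ⟨u, -, ψ, hψ, hlim⟩ := (isCompact_univ_pi fun _ => isCompact_Icc).tendsto_subseq hv
  have hm : Tendsto (fun i => (φ (ψ i) : ℤ)) atTop atTop :=
    tendsto_natCast_atTop_atTop.comp (hφ.comp hψ).tendsto_atTop
  obtain ⟨c, hc⟩ := exists_eq_add_const_of_sub_pred_eq <|
    sub_pred_eq_of_tendsto_sub_shift hm he fun k => ((continuous_apply k).tendsto u).comp hlim
  have hu : ∑' k, ENNReal.ofReal (u k ^ 2) ≤ C :=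
    lowerSemicontinuous_tsum_ofReal_sq.le_of_tendsto hlim <|
      Eventually.of_forall fun i => hφC (ψ i)
  have hu0 : Tendsto u atBot (𝓝 0) :=
    (tendsto_cofinite_zero_of_tsum_ofReal_sq_ne_top <|
      ne_top_of_le_ne_top ENNReal.coe_ne_top hu).mono_left atBot_le_cofinite
  exact ⟨0 + c, (hu0.add_const c).congr fun k => (hc k).symm⟩

theorem tendsto_tsum_ofReal_sq_sub_shift_nhds_top {x : ℤ → ℝ} {a b : ℝ}
    (hx : ∀ k, x k ∈ Icc a b)
    (he : Tendsto (fun k => x k - x (k - 1)) atBot (𝓝 0))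
    (hx_osc : ¬∃ c, Tendsto x atBot (𝓝 c)) :
    Tendsto (fun n : ℕ => ∑' k, ENNReal.ofReal ((x k - x (k - n)) ^ 2)) atTop (𝓝 ⊤) := by
  refine ENNReal.tendsto_nhds_top_iff_nnreal.2 fun C => ?_
  by_contra h
  exact hx_osc (exists_tendsto_atBot_of_frequently_tsum_ofReal_sq_sub_shift_le hx he
    (by simpa only [not_eventually, not_lt] using h))

theorem zero_type_of_oscillating_marginals_general (p : ℤ → ℝ)
    (hp : ∀ k, p k ∈ Set.Ioo (0 : ℝ) 1)
    -- `P` is non-singular for the shift: `d(P, P ∘ T) < ∞`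
    (hns : Summable (fun k : ℤ =>
        (Real.sqrt (p k) - Real.sqrt (p (k - 1))) ^ 2 +
        (Real.sqrt (1 - p k) - Real.sqrt (1 - p (k - 1))) ^ 2))
    (hosc : liminf p atBot ≠ limsup p atBot) :
    Tendsto (fun n : ℕ => dShift p n) atTop (nhds ⊤) := by
  set x : ℤ → ℝ := fun k => Real.sqrt (p k)
  have hx : ∀ k, x k ∈ Icc 0 1 := fun k => ⟨Real.sqrt_nonneg _, Real.sqrt_le_one.2 (hp k).2.le⟩
  have he : Tendsto (fun k => x k - x (k - 1)) atBot (𝓝 0) :=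
    tendsto_zero_of_tendsto_sq <| squeeze_zero (fun _ => sq_nonneg _)
      (fun _ => le_add_of_nonneg_right (sq_nonneg _))
      (hns.tendsto_cofinite_zero.mono_left atBot_le_cofinite)
  have hx_osc : ¬∃ c, Tendsto x atBot (𝓝 c) := by
    rintro ⟨c, hc⟩
    have hpc : Tendsto p atBot (𝓝 (c ^ 2)) :=
      (hc.pow 2).congr fun k => Real.sq_sqrt (hp k).1.le
    exact hosc (by rw [hpc.liminf_eq, hpc.limsup_eq])
  refine tendsto_nhds_top_mono (tendsto_tsum_ofReal_sq_sub_shift_nhds_top hx he hx_osc)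
    (Eventually.of_forall fun n => ENNReal.tsum_le_tsum fun k => ?_)
  exact ENNReal.ofReal_le_ofReal (le_add_of_nonneg_right (sq_nonneg _))

theorem zero_type_of_oscillating_marginals (p : ℤ → ℝ)
    (hp : ∀ k, p k ∈ Set.Ioo (0 : ℝ) 1)
    (P : Measure (ℤ → Bool)) [IsProbabilityMeasure P]
    (hP : IsProductMeasure P p)
    -- `P` is non-singular for the shift: `d(P, P ∘ T) < ∞`
    (hns : Summable (fun k : ℤ =>
        (Real.sqrt (p k) - Real.sqrt (p (k - 1))) ^ 2 +
        (Real.sqrt (1 - p k) - Real.sqrt (1 - p (k - 1))) ^ 2))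
    (hosc : liminf p atBot ≠ limsup p atBot) :
    Tendsto (fun n : ℕ => dShift p n) atTop (nhds ⊤) :=
  zero_type_of_oscillating_marginals_general p hp hns hosc
end
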